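/- Let 𝓛 be an even mixed form of codegree k and additional degree r on an open set U ⊆ ℝⁿ, and let Δ𝓛 be its differential, Δ𝓛(x, p, ŵ) := (−1)^r Σ_{K=1}^{k} Σ_{A=1}^{n} w'^K (∂²𝓛/∂x^A∂p_A^K)(x, p, w), where ŵ ∈ Matrix((r+1)×k, ℝ) has first r rows w and last row w'. Then Δ𝓛 is right-covariant: Δ𝓛(x, p·g, ŵ·g) = det g · Δ𝓛(x, p, ŵ) for all x, p, ŵ and all invertible g ∈ Matrix(k×k, ℝ). -/

import Mathlib

open MeasureTheory
open scoped BigOperators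

noncomputable section

/-- Product of matrices given as functions (entry `(i,k)` is `∑ j, M i j * N j k`). -/
def mmul {a b c : ℕ} (M : Fin a → Fin b → ℝ) (N : Fin b → Fin c → ℝ) :
    Fin a → Fin c → ℝ :=
  fun i k => ∑ j, M i j * N j k

/-- Determinant of a square matrix given as a function. -/
def fdet {a : ℕ} (M : Fin a → Fin a → ℝ) : ℝ :=
  Matrix.det (Matrix.of M)

/-- Partial derivative of a function of a matrix with respect to the `(i,j)` entry. -/
def pdM {a b : ℕ} (L : (Fin a → Fin b → ℝ) → ℝ) (i : Fin a) (j : Fin b)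
    (m : Fin a → Fin b → ℝ) : ℝ :=
  deriv (fun t : ℝ => L (fun i' j' => m i' j' + (if i' = i ∧ j' = j then t else 0))) 0

/-- Partial derivative of a function of a vector with respect to the `i`-th coordinate. -/
def pdV {a : ℕ} (f : (Fin a → ℝ) → ℝ) (i : Fin a) (x : Fin a → ℝ) : ℝ :=
  deriv (fun t : ℝ => f (fun i' => x i' + (if i' = i then t else 0))) 0

/-- The fundamental equations for a function of an `a × b` matrix:
for all rows `i₁, i₂` and columns `j₁, j₂`,
`∂²L/∂m_{i₁}^{j₁}∂m_{i₂}^{j₂} + ∂²L/∂m_{i₂}^{j₁}∂m_{i₁}^{j₂} = 0`. -/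
def FundEqs {a b : ℕ} (L : (Fin a → Fin b → ℝ) → ℝ) : Prop :=
  ∀ (i₁ i₂ : Fin a) (j₁ j₂ : Fin b) (m : Fin a → Fin b → ℝ),
    pdM (fun m' => pdM L i₂ j₂ m') i₁ j₁ m + pdM (fun m' => pdM L i₁ j₂ m') i₂ j₁ m = 0

/-- The velocity matrix of a path `γ`: `(vel γ t) F A = ∂γ^A/∂t^F (t)`. -/
def vel {r n : ℕ} (γ : (Fin r → ℝ) → (Fin n → ℝ)) (t : Fin r → ℝ) :
    Fin r → Fin n → ℝ :=
  fun F A => pdV (fun s => γ s A) F t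

/-- The matrix of gradients of a copath `f`: `(grad f x) A K = ∂f^K/∂x^A (x)`. -/
def grad {n k : ℕ} (f : (Fin n → ℝ) → (Fin k → ℝ)) (x : Fin n → ℝ) :
    Fin n → Fin k → ℝ :=
  fun A K => pdV (fun y => f y K) A x

/-- An even `r`-form on an open set `U ⊆ ℝⁿ`: a smooth function `L(x, ẋ)` of a point
`x` and an `r × n` matrix `ẋ` which is covariant (`L(x, h·ẋ) = det h · L(x, ẋ)` for
invertible `h`) and satisfies the fundamental equations in the entries of `ẋ`. -/
def IsEvenForm {n r : ℕ} (U : Set (Fin n → ℝ))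
    (L : (Fin n → ℝ) → (Fin r → Fin n → ℝ) → ℝ) : Prop :=
  ContDiffOn ℝ (⊤ : ℕ∞)
      (fun q : (Fin n → ℝ) × (Fin r → Fin n → ℝ) => L q.1 q.2)
      (U ×ˢ (Set.univ : Set (Fin r → Fin n → ℝ))) ∧
  (∀ x ∈ U, ∀ (xdot : Fin r → Fin n → ℝ) (h : Fin r → Fin r → ℝ), fdet h ≠ 0 →
    L x (mmul h xdot) = fdet h * L x xdot) ∧
  (∀ x ∈ U, FundEqs (L x))

/-- The differential of a Lagrangian of paths `L(x, ẋ)`: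
`ΔL(x, (ẋ; ẏ)) = (−1)^r Σ_A ẏ^A (∂L/∂x^A − Σ_{F,B} ẋ_F^B ∂²L/∂x^B∂ẋ_F^A)`,
where `ẋ` consists of the first `r` rows and `ẏ` is the last row of the argument. -/
def Dform {n r : ℕ} (L : (Fin n → ℝ) → (Fin r → Fin n → ℝ) → ℝ) :
    (Fin n → ℝ) → (Fin (r + 1) → Fin n → ℝ) → ℝ :=
  fun x M => (-1 : ℝ) ^ r * ∑ A, M (Fin.last r) A *
    (pdV (fun x' => L x' (fun F => M (Fin.castSucc F))) A x
      - ∑ F, ∑ B, M (Fin.castSucc F) B *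
          pdV (fun x' => pdM (L x') F A (fun G => M (Fin.castSucc G))) B x)

/-- An even mixed form of codegree `k` and additional degree `r` on an open set
`U ⊆ ℝⁿ`: a smooth function `𝓛(x, p, w)` which is right-covariant, left-covariant,
admissible, and satisfies the fundamental equations in the entries of the stacked
`(n+r) × k` matrix (`p` over `w`). -/
def IsMixedForm {n k r : ℕ} (U : Set (Fin n → ℝ))
    (L : (Fin n → ℝ) → (Fin n → Fin k → ℝ) → (Fin r → Fin k → ℝ) → ℝ) : Prop :=
  ContDiffOn ℝ (⊤ : ℕ∞)
      (fun q : (Fin n → ℝ) × (Fin n → Fin k → ℝ) × (Fin r → Fin k → ℝ) =>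
        L q.1 q.2.1 q.2.2)
      (U ×ˢ (Set.univ : Set ((Fin n → Fin k → ℝ) × (Fin r → Fin k → ℝ)))) ∧
  (∀ x ∈ U, ∀ (p : Fin n → Fin k → ℝ) (w : Fin r → Fin k → ℝ) (g : Fin k → Fin k → ℝ),
    fdet g ≠ 0 → L x (mmul p g) (mmul w g) = fdet g * L x p w) ∧
  (∀ x ∈ U, ∀ (p : Fin n → Fin k → ℝ) (w : Fin r → Fin k → ℝ) (h : Fin r → Fin r → ℝ),
    fdet h ≠ 0 → L x p (mmul h w) = fdet h * L x p w) ∧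
  (∀ x ∈ U, ∀ (p : Fin n → Fin k → ℝ) (w : Fin r → Fin k → ℝ) (a : Fin n → Fin r → ℝ),
    L x (p + mmul a w) w = L x p w) ∧
  (∀ x ∈ U, FundEqs (fun m : Fin (n + r) → Fin k → ℝ =>
    L x (fun A => m (Fin.castAdd r A)) (fun F => m (Fin.natAdd n F))))

/-- The differential of a mixed Lagrangian `𝓛(x, p, w)`:
`Δ𝓛(x, p, ŵ) = (−1)^r Σ_{K,A} w'^K ∂²𝓛/∂x^A∂p_A^K (x, p, w)`, where `ŵ` has first
`r` rows `w` and last row `w'`. -/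
def Dmix {n k r : ℕ}
    (L : (Fin n → ℝ) → (Fin n → Fin k → ℝ) → (Fin r → Fin k → ℝ) → ℝ) :
    (Fin n → ℝ) → (Fin n → Fin k → ℝ) → (Fin (r + 1) → Fin k → ℝ) → ℝ :=
  fun x p what => (-1 : ℝ) ^ r * ∑ K, ∑ A, what (Fin.last r) K *
    pdV (fun x' => pdM (fun p' => L x' p' (fun F => what (Fin.castSucc F))) A K p) A x

/-- An even dual form of codegree `k` on an open set `U ⊆ ℝⁿ`: a smooth function
`𝓛(x, p)` of a point `x` and an `n × k` matrix `p` of momenta which is covariant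
(`𝓛(x, p·g) = det g · 𝓛(x, p)` for invertible `g`) and satisfies the fundamental
equations in the entries of `p`. -/
def IsDualForm {n k : ℕ} (U : Set (Fin n → ℝ))
    (L : (Fin n → ℝ) → (Fin n → Fin k → ℝ) → ℝ) : Prop :=
  ContDiffOn ℝ (⊤ : ℕ∞)
      (fun q : (Fin n → ℝ) × (Fin n → Fin k → ℝ) => L q.1 q.2)
      (U ×ˢ (Set.univ : Set (Fin n → Fin k → ℝ))) ∧
  (∀ x ∈ U, ∀ (p : Fin n → Fin k → ℝ) (g : Fin k → Fin k → ℝ), fdet g ≠ 0 →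
    L x (mmul p g) = fdet g * L x p) ∧
  (∀ x ∈ U, FundEqs (L x))

/-- The identity matrix as a function. -/
def idm (n : ℕ) : Fin n → Fin n → ℝ := fun i j => if i = j then 1 else 0

/-! Differentiating the right-covariance identity `𝓛(x', q·g, w·g) = det g · 𝓛(x', q, w)` in `q`
along `E_{AK}`, with `p·g + t E_{AK} = (p + t E_{AK} g⁻¹)·g`, shows that the momentum derivatives
`∂𝓛/∂p_A^K` transform by `det g · g⁻¹` in the column index `K`. The identity holds for every `x'`
near `x`, so this transformation law survives the `x`-derivative. Contracting with the row `w'·g`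
in `Δ𝓛`, the factors `g · g⁻¹` cancel and only `det g` remains. -/

lemma pdM_eq_lineDeriv {a b : ℕ} (F : (Fin a → Fin b → ℝ) → ℝ) (i : Fin a) (j : Fin b)
    (m : Fin a → Fin b → ℝ) :
    pdM F i j m = lineDeriv ℝ F m (Pi.single i (Pi.single j 1)) := by
  unfold pdM lineDeriv
  congr 1; funext t; congr 1; funext i' j'
  by_cases hi : i' = i <;> by_cases hj : j' = j <;> simp [hi, hj]

lemma pdV_eq_lineDeriv {a : ℕ} (f : (Fin a → ℝ) → ℝ) (i : Fin a) (x : Fin a → ℝ) :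
    pdV f i x = lineDeriv ℝ f x (Pi.single i 1) := by
  unfold pdV lineDeriv
  congr 1; funext t; congr 1; funext i'
  by_cases hi : i' = i <;> simp [hi]

lemma pdV_const_mul_sum {a : ℕ} {ι : Type*} [Fintype ι] (c : ℝ) (w : ι → ℝ)
    {φ : ι → (Fin a → ℝ) → ℝ} {x : Fin a → ℝ} (hφ : ∀ M, DifferentiableAt ℝ (φ M) x)
    (i : Fin a) :
    pdV (fun y => c * ∑ M, w M * φ M y) i x = c * ∑ M, w M * pdV (φ M) i x := by
  have hd : HasFDerivAt (fun y => c * ∑ M, w M * φ M y)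
      (c • ∑ M, w M • fderiv ℝ (φ M) x) x :=
    (HasFDerivAt.fun_sum fun M _ => (hφ M).hasFDerivAt.const_mul (w M)).const_mul c
  simp [pdV_eq_lineDeriv, hd.differentiableAt.lineDeriv_eq_fderiv, hd.fderiv,
    (hφ _).lineDeriv_eq_fderiv]

lemma differentiableAt_slice {E F : Type*} [NormedAddCommGroup E] [NormedSpace ℝ E]
    [NormedAddCommGroup F] [NormedSpace ℝ F] {Ψ : E × F → ℝ} {s : Set (E × F)}
    (hΨ : ContDiffOn ℝ 1 Ψ s) (hs : IsOpen s) {x : E} {y : F} (hxy : (x, y) ∈ s) :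
    DifferentiableAt ℝ (fun y' => Ψ (x, y')) y :=
  ((hΨ.contDiffAt (hs.mem_nhds hxy)).differentiableAt one_ne_zero).comp y
    ((differentiableAt_const x).prodMk differentiableAt_id)

lemma differentiableAt_pdM_slice {E : Type*} [NormedAddCommGroup E] [NormedSpace ℝ E]
    {a b : ℕ} {Ψ : E × (Fin a → Fin b → ℝ) → ℝ} {s : Set (E × (Fin a → Fin b → ℝ))}
    (hΨ : ContDiffOn ℝ 2 Ψ s) (hs : IsOpen s) {x : E} {p : Fin a → Fin b → ℝ}
    (hxp : (x, p) ∈ s) (i : Fin a) (j : Fin b) :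
    DifferentiableAt ℝ (fun x' => pdM (fun p' => Ψ (x', p')) i j p) x := by
  set v : Fin a → Fin b → ℝ := Pi.single i (Pi.single j 1)
  have hpartial : ∀ x', (x', p) ∈ s →
      pdM (fun p' => Ψ (x', p')) i j p = fderiv ℝ Ψ (x', p) (0, v) := by
    intro x' hx'
    have hdiff : DifferentiableAt ℝ Ψ (x', p) :=
      (hΨ.contDiffAt (hs.mem_nhds hx')).differentiableAt (by norm_num)
    rw [pdM_eq_lineDeriv, ← hdiff.lineDeriv_eq_fderiv]
    unfold lineDeriv
    congr 1
    funext t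
    simp [v]
  have hnear : ∀ᶠ x' in nhds x, (x', p) ∈ s :=
    (continuous_id.prodMk continuous_const).continuousAt.preimage_mem_nhds (hs.mem_nhds hxp)
  have hfderiv : DifferentiableAt ℝ (fderiv ℝ Ψ) (x, p) :=
    ((hΨ.fderiv_of_isOpen hs (m := 1) (by norm_num)).differentiableOn
      (by norm_num)).differentiableAt (hs.mem_nhds hxp)
  exact ((hfderiv.comp x (differentiableAt_id.prodMk (differentiableAt_const p))).clm_apply
    (differentiableAt_const _)).congr_of_eventuallyEq (hnear.mono hpartial)

lemma mmul_single_eq_sum {a b c : ℕ} (i : Fin a) (j : Fin b) (N : Fin b → Fin c → ℝ) :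
    mmul (Pi.single i (Pi.single j 1)) N = ∑ l, N j l • Pi.single i (Pi.single l 1) := by
  funext i' l'
  by_cases hi : i' = i <;> simp [hi, mmul, Finset.sum_apply, Pi.single_apply]

lemma mmul_add_smul_mmul_of_mul_eq_one {a b : ℕ} {g h : Fin b → Fin b → ℝ}
    (hhg : Matrix.of h * Matrix.of g = 1) (p v : Fin a → Fin b → ℝ) (t : ℝ) :
    mmul (p + t • mmul v h) g = mmul p g + t • v := by
  change (Matrix.of p + t • (Matrix.of v * Matrix.of h)) * Matrix.of g = _
  rw [Matrix.add_mul, Matrix.smul_mul, Matrix.mul_assoc, hhg, Matrix.mul_one]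
  rfl

open Matrix in
lemma sum_vecMul_mul_mulVec_of_mul_eq_one {k : ℕ} {g h : Fin k → Fin k → ℝ}
    (hgh : Matrix.of g * Matrix.of h = 1) (u d : Fin k → ℝ) (c : ℝ) :
    ∑ K, (∑ J, u J * g J K) * (c * ∑ M, h K M * d M) = c * ∑ K, u K * d K := by
  simp_rw [mul_left_comm _ c, ← Finset.mul_sum]
  change c * ((u ᵥ* Matrix.of g) ⬝ᵥ (Matrix.of h *ᵥ d)) = c * (u ⬝ᵥ d)
  rw [← Matrix.dotProduct_mulVec, Matrix.mulVec_mulVec, hgh, Matrix.one_mulVec]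

lemma pdM_mmul_of_covariant {n k : ℕ} {F G : (Fin n → Fin k → ℝ) → ℝ}
    {g h : Fin k → Fin k → ℝ} {c : ℝ} (hhg : Matrix.of h * Matrix.of g = 1)
    (hFG : ∀ q, F (mmul q g) = c * G q) {p : Fin n → Fin k → ℝ} (hG : DifferentiableAt ℝ G p)
    (A : Fin n) (K : Fin k) :
    pdM F A K (mmul p g) = c * ∑ M, h K M * pdM G A M p := by
  set E : Fin n → Fin k → ℝ := Pi.single A (Pi.single K 1)
  have hline : (fun t : ℝ => F (mmul p g + t • E)) = fun t => c * G (p + t • mmul E h) := by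
    funext t
    rw [← mmul_add_smul_mmul_of_mul_eq_one hhg, hFG]
  rw [pdM_eq_lineDeriv, lineDeriv, hline, deriv_const_mul_field, ← lineDeriv,
    hG.lineDeriv_eq_fderiv, mmul_single_eq_sum A K h, map_sum]
  simp only [map_smul, smul_eq_mul, pdM_eq_lineDeriv, hG.lineDeriv_eq_fderiv]

lemma IsMixedForm.contDiffOn_slice {n k r : ℕ} {U : Set (Fin n → ℝ)}
    {L : (Fin n → ℝ) → (Fin n → Fin k → ℝ) → (Fin r → Fin k → ℝ) → ℝ}
    (hL : IsMixedForm U L) (w : Fin r → Fin k → ℝ) :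
    ContDiffOn ℝ 2 (fun q : (Fin n → ℝ) × (Fin n → Fin k → ℝ) => L q.1 q.2 w)
      (U ×ˢ Set.univ) :=
  (hL.1.comp (contDiff_fst.prodMk (contDiff_snd.prodMk contDiff_const)).contDiffOn
    fun _ hq => ⟨hq.1, trivial⟩).of_le (WithTop.coe_le_coe.mpr le_top)

lemma IsMixedForm.pdV_pdM_mmul {n k r : ℕ} {U : Set (Fin n → ℝ)}
    {L : (Fin n → ℝ) → (Fin n → Fin k → ℝ) → (Fin r → Fin k → ℝ) → ℝ}
    (hL : IsMixedForm U L) (hU : IsOpen U) {x : Fin n → ℝ} (hx : x ∈ U)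
    (p : Fin n → Fin k → ℝ) (w : Fin r → Fin k → ℝ) {g : Fin k → Fin k → ℝ} (hg : fdet g ≠ 0)
    (A : Fin n) (K : Fin k) :
    pdV (fun x' => pdM (fun p' => L x' p' (mmul w g)) A K (mmul p g)) A x
      = fdet g * ∑ M, (Matrix.of g)⁻¹ K M *
          pdV (fun x' => pdM (fun p' => L x' p' w) A M p) A x := by
  have hslice := hL.contDiffOn_slice w
  have hUopen : IsOpen (U ×ˢ (Set.univ : Set (Fin n → Fin k → ℝ))) := hU.prod isOpen_univ
  have hmom : (fun x' => pdM (fun p' => L x' p' (mmul w g)) A K (mmul p g))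
      =ᶠ[nhds x] fun x' => fdet g * ∑ M, (Matrix.of g)⁻¹ K M * pdM (fun p' => L x' p' w) A M p :=
    Filter.eventually_of_mem (hU.mem_nhds hx) fun x' hx' =>
      pdM_mmul_of_covariant (Matrix.nonsing_inv_mul _ (isUnit_iff_ne_zero.mpr hg))
        (fun q => hL.2.1 x' hx' q w g hg)
        (differentiableAt_slice (hslice.of_le one_le_two) hUopen ⟨hx', trivial⟩) A K
  rw [pdV_eq_lineDeriv, hmom.lineDeriv_eq, ← pdV_eq_lineDeriv,
    pdV_const_mul_sum _ _ fun M => differentiableAt_pdM_slice hslice hUopen ⟨hx, trivial⟩ A M]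

/-- The differential `Δ𝓛` of an even mixed form `𝓛` of codegree
`k` and additional degree `r` on `U` is right-covariant:
`Δ𝓛(x, p·g, ŵ·g) = det g · Δ𝓛(x, p, ŵ)` for all invertible `g`. -/
theorem statement_12 (n k r : ℕ) (U : Set (Fin n → ℝ)) (hU : IsOpen U)
    (L : (Fin n → ℝ) → (Fin n → Fin k → ℝ) → (Fin r → Fin k → ℝ) → ℝ)
    (hL : IsMixedForm U L) :
    ∀ x ∈ U, ∀ (p : Fin n → Fin k → ℝ) (what : Fin (r + 1) → Fin k → ℝ)
        (g : Fin k → Fin k → ℝ), fdet g ≠ 0 →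
      Dmix L x (mmul p g) (mmul what g) = fdet g * Dmix L x p what := by
  intro x hx p what g hg
  set D : Fin n → Fin k → ℝ := fun A M =>
    pdV (fun x' => pdM (fun p' => L x' p' fun F => what (Fin.castSucc F)) A M p) A x
  have hgh : Matrix.of g * (Matrix.of g)⁻¹ = 1 :=
    Matrix.mul_nonsing_inv _ (isUnit_iff_ne_zero.mpr hg)
  calc Dmix L x (mmul p g) (mmul what g)
      = (-1) ^ r * ∑ A, ∑ K, mmul what g (Fin.last r) K
          * (fdet g * ∑ M, (Matrix.of g)⁻¹ K M * D A M) := by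
        rw [Dmix, Finset.sum_comm]
        exact congrArg _ <| Finset.sum_congr rfl fun A _ => Finset.sum_congr rfl fun K _ =>
          congrArg _ (hL.pdV_pdM_mmul hU hx p _ hg A K)
    _ = (-1) ^ r * ∑ A, fdet g * ∑ K, what (Fin.last r) K * D A K :=
        congrArg _ <| Finset.sum_congr rfl fun A _ =>
          sum_vecMul_mul_mulVec_of_mul_eq_one hgh _ (D A) _
    _ = (-1) ^ r * (fdet g * ∑ K, ∑ A, what (Fin.last r) K * D A K) := by
        rw [← Finset.mul_sum, Finset.sum_comm]
    _ = fdet g * Dmix L x p what := mul_left_comm _ _ _
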